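/- For every n ∈ ℕ and all x, y, z ∈ BitVec n, the identity 2*((y & (~z)) | (x & (y | (~z)))) - (x ^ y ^ z) = x + y - z holds, where ^ denotes bitwise xor and arithmetic is modulo 2^n. -/

import Mathlib

/-!
Adding the three words `x`, `y`, `~z` bitwise gives sum bits `x ^ y ^ ~z` and carries
`maj(x, y, ~z) = (y & ~z) | (x & (y | ~z))`, so `x + y + ~z = (x ^ y ^ ~z) + 2 * maj(x, y, ~z)`.
Since `x ^ y ^ z = ~(x ^ y ^ ~z)` and `~a = -a - 1` in two's complement, the left-hand side equals
`2 * maj + (x ^ y ^ ~z) + 1 = x + y + ~z + 1 = x + y - z`.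
-/

namespace BitVec

variable {w : ℕ}

theorem and_add_and_not (x y : BitVec w) : (x &&& y) + (x &&& ~~~y) = x := by
  rw [add_eq_or_of_and_eq_zero]
  · ext i
    simp only [getElem_or, getElem_and, getElem_not]
    cases x[i] <;> cases y[i] <;> rfl
  · ext i
    simp only [getElem_and, getElem_not, getElem_zero]
    cases x[i] <;> cases y[i] <;> rfl

theorem and_not_add_and_not (x y : BitVec w) : (x &&& ~~~y) + (y &&& ~~~x) = x ^^^ y := by
  rw [add_eq_or_of_and_eq_zero]
  · ext i
    simp only [getElem_or, getElem_and, getElem_not, getElem_xor]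
    cases x[i] <;> cases y[i] <;> rfl
  · ext i
    simp only [getElem_and, getElem_not, getElem_zero]
    cases x[i] <;> cases y[i] <;> rfl

theorem add_eq_xor_add_two_mul_and (x y : BitVec w) :
    x + y = (x ^^^ y) + 2 * (x &&& y) := by
  calc x + y = ((x &&& y) + (x &&& ~~~y)) + ((y &&& x) + (y &&& ~~~x)) := by
        rw [and_add_and_not, and_add_and_not]
    _ = (x ^^^ y) + 2 * (x &&& y) := by
        rw [← and_not_add_and_not, and_comm y x]
        ring

theorem or_and_or_eq_and_add_xor_and (x y z : BitVec w) :
    (y &&& z) ||| (x &&& (y ||| z)) = (x &&& y) + ((x ^^^ y) &&& z) := by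
  rw [add_eq_or_of_and_eq_zero]
  · ext i
    simp only [getElem_or, getElem_and, getElem_xor]
    cases x[i] <;> cases y[i] <;> cases z[i] <;> rfl
  · ext i
    simp only [getElem_and, getElem_xor, getElem_zero]
    cases x[i] <;> cases y[i] <;> cases z[i] <;> rfl

theorem add_add_eq_xor_xor_add_two_mul_maj (x y z : BitVec w) :
    x + y + z = (x ^^^ y ^^^ z) + 2 * ((y &&& z) ||| (x &&& (y ||| z))) := by
  rw [or_and_or_eq_and_add_xor_and, add_eq_xor_add_two_mul_and x y, add_right_comm,
    add_eq_xor_add_two_mul_and (x ^^^ y) z]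
  ring

end BitVec

/-- `2((y & ~z) | (x & (y | ~z))) - (x ^ y ^ z) = x + y - z` in `BitVec n`. -/
theorem mba_e4 (n : ℕ) (x y z : BitVec n) :
    2 * ((y &&& ~~~z) ||| (x &&& (y ||| ~~~z))) - (x ^^^ y ^^^ z) = x + y - z := by
  have full_adder := BitVec.add_add_eq_xor_xor_add_two_mul_maj x y (~~~z)
  have xor_not : x ^^^ y ^^^ z = ~~~(x ^^^ y ^^^ ~~~z) := by
    rw [BitVec.not_xor_right, BitVec.not_not]
  rw [xor_not, BitVec.not_eq_neg_add (x ^^^ y ^^^ ~~~z)]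
  rw [BitVec.not_eq_neg_add z] at full_adder ⊢
  linear_combination -full_adder
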